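/- (Proposition 3.) In the setting of Propositions 1 and 2, define Λ(θ) = log λ(θ) for real θ. There exists 0 < θ₂ < θ₁ such that for every real θ with |θ| < θ₂ and every f ∈ B with f ≥ 0 m-a.e. and ∫ f dm = 1, one has lim_{n→∞} (1/n) log ∫ e^{θ S_n} f dm = Λ(θ), where S_n = Σ_{k=0}^{n-1} φ∘T^k. -/

import Mathlib

/-!
Writing `L = P_θ`, duality for the Perron–Frobenius operator gives
`∫ e^{θ S_n} f dm = ∫ Lⁿ f dm`, and the spectral decomposition `L = λ p(·) v + Q(θ)` gives
`∫ Lⁿ f dm = λⁿ p(f) ∫ v dm + O(rⁿ)` with `r < λ`. It remains to see that the coefficient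
`a = p(f) ∫ v dm` is positive. Since `|S_n| ≤ n K`, the integral is at least `e^{-n|θ|K}`;
for `|θ|` small this beats `rⁿ`, which forces `a > 0`, and then `(1/n) log (λⁿ a + O(rⁿ)) → log λ`.
-/

open MeasureTheory Filter Topology

theorem add_pow_succ_of_mul_eq_zero {A : Type*} [Semiring A] {a b : A} (hab : a * b = 0)
    (hba : b * a = 0) (n : ℕ) : (a + b) ^ (n + 1) = a ^ (n + 1) + b ^ (n + 1) := by
  induction n with
  | zero => simp
  | succ n ih =>
    have hab' : a ^ (n + 1) * b = 0 := by rw [pow_succ, mul_assoc, hab, mul_zero]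
    have hba' : b ^ (n + 1) * a = 0 := by rw [pow_succ, mul_assoc, hba, mul_zero]
    rw [pow_succ _ (n + 1), ih, add_mul, mul_add, mul_add, hab', hba', add_zero, zero_add,
      ← pow_succ, ← pow_succ]

section RankOne

variable {𝕜 E : Type*} [NontriviallyNormedField 𝕜] [NormedAddCommGroup E] [NormedSpace 𝕜 E]

theorem pow_succ_smul_smulRight_add {p : E →L[𝕜] 𝕜} {v : E} {Q : E →L[𝕜] E} (hpv : p v = 1)
    (hQv : Q v = 0) (hpQ : p ∘L Q = 0) (c : 𝕜) (n : ℕ) :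
    (c • p.smulRight v + Q) ^ (n + 1) = c ^ (n + 1) • p.smulRight v + Q ^ (n + 1) := by
  have hidem : IsIdempotentElem (p.smulRight v) := by
    ext g; simp [hpv]
  have hPQ : c • p.smulRight v * Q = 0 := by
    ext g
    have hpQg : p (Q g) = 0 := by simpa using DFunLike.congr_fun hpQ g
    simp [hpQg]
  have hQP : Q * c • p.smulRight v = 0 := by
    ext g; simp [hQv]
  rw [add_pow_succ_of_mul_eq_zero hPQ hQP, smul_pow, hidem.pow_succ_eq]

theorem norm_apply_pow_succ_sub_le {L Q : E →L[𝕜] E} {p : E →L[𝕜] 𝕜} {v : E} {c : 𝕜}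
    (hL : ∀ g, L g = (c * p g) • v + Q g) (hpv : p v = 1) (hQv : Q v = 0) (hpQ : p ∘L Q = 0)
    (ℓ : E →L[𝕜] 𝕜) (n : ℕ) (g : E) :
    ‖ℓ ((L ^ (n + 1)) g) - c ^ (n + 1) * p g * ℓ v‖ ≤ ‖ℓ‖ * ‖Q ^ (n + 1)‖ * ‖g‖ := by
  have hL' : L = c • p.smulRight v + Q := by
    ext g; simp [hL, mul_smul]
  rw [hL', pow_succ_smul_smulRight_add hpv hQv hpQ]
  simp only [add_apply, smul_apply, ContinuousLinearMap.smulRight_apply, map_add, map_smul,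
    smul_eq_mul]
  rw [← mul_assoc, add_sub_cancel_left, mul_assoc]
  exact (ℓ.le_opNorm _).trans
    (mul_le_mul_of_nonneg_left ((Q ^ (n + 1)).le_opNorm g) (norm_nonneg _))

end RankOne

theorem tendsto_inv_mul_log_of_abs_sub_le {R : ℕ → ℝ} {a D r κ Λ : ℝ} (hr : 0 ≤ r)
    (hrκ : r < κ) (hrΛ : r < Λ) (hlow : ∀ᶠ n in atTop, κ ^ n ≤ R n)
    (herr : ∀ᶠ n in atTop, |R n - a * Λ ^ n| ≤ D * r ^ n) :
    Tendsto (fun n : ℕ => (n : ℝ)⁻¹ * Real.log (R n)) atTop (𝓝 (Real.log Λ)) := by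
  have hκ : 0 < κ := hr.trans_lt hrκ
  have hΛ : 0 < Λ := hr.trans_lt hrΛ
  have hgeom : ∀ {s : ℝ}, r < s → Tendsto (fun n : ℕ => D * (r / s) ^ n) atTop (𝓝 0) := by
    intro s hrs
    have hs : 0 < s := hr.trans_lt hrs
    simpa using (tendsto_pow_atTop_nhds_zero_of_lt_one (div_nonneg hr hs.le)
      ((div_lt_one hs).2 hrs)).const_mul D
  have hlim : Tendsto (fun n => R n / Λ ^ n) atTop (𝓝 a) := by
    refine tendsto_iff_norm_sub_tendsto_zero.2 (squeeze_zero_norm' ?_ (hgeom hrΛ))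
    filter_upwards [herr] with n hn
    rw [Real.norm_eq_abs, Real.norm_eq_abs, abs_abs, div_sub' (pow_pos hΛ n).ne', abs_div,
      abs_of_pos (pow_pos hΛ n), div_pow, ← mul_div_assoc, mul_comm (Λ ^ n)]
    exact div_le_div_of_nonneg_right hn (pow_pos hΛ n).le
  -- If `a ≤ 0` then `κ ^ n ≤ R n ≤ D * r ^ n` for large `n`, which `r < κ` forbids.
  have ha : 0 < a := by
    by_contra! ha
    obtain ⟨n, hlow, herr, hsmall⟩ := (hlow.and (herr.and
      ((hgeom hrκ).eventually_lt_const one_pos))).exists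
    have hrn : D * r ^ n < κ ^ n := by
      have := mul_lt_mul_of_pos_right hsmall (pow_pos hκ n)
      rwa [div_pow, one_mul, mul_assoc, div_mul_cancel₀ _ (pow_pos hκ n).ne'] at this
    have hneg : a * Λ ^ n ≤ 0 := mul_nonpos_of_nonpos_of_nonneg ha (pow_pos hΛ n).le
    linarith [le_abs_self (R n - a * Λ ^ n)]
  have hlog : Tendsto (fun n : ℕ => Real.log Λ + (n : ℝ)⁻¹ * Real.log (R n / Λ ^ n)) atTop
      (𝓝 (Real.log Λ + 0 * Real.log a)) :=
    tendsto_const_nhds.add (tendsto_inv_atTop_nhds_zero_nat.mul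
      ((Real.continuousAt_log ha.ne').tendsto.comp hlim))
  rw [zero_mul, add_zero] at hlog
  refine hlog.congr' ?_
  filter_upwards [eventually_ne_atTop 0, hlow] with n hn hlown
  have hRn : 0 < R n := (pow_pos hκ n).trans_le hlown
  rw [Real.log_div hRn.ne' (pow_pos hΛ n).ne', Real.log_pow]
  field_simp
  ring

section Nonsingular

variable {X : Type*} [MeasurableSpace X] {m : Measure X} {T : X → X}

theorem quasiMeasurePreserving_of_preimage_null (hT : Measurable T)
    (hns : ∀ A : Set X, MeasurableSet A → m A = 0 → m (T ⁻¹' A) = 0) :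
    Measure.QuasiMeasurePreserving T m m :=
  ⟨hT, Measure.AbsolutelyContinuous.mk fun A hA h0 => by
    rw [Measure.map_apply hT hA]; exact hns A hA h0⟩

theorem measurable_birkhoffSum {M : Type*} [AddCommMonoid M] [MeasurableSpace M]
    [MeasurableAdd₂ M] (hT : Measurable T) {ψ : X → M} (hψ : Measurable ψ) (n : ℕ) :
    Measurable (birkhoffSum T ψ n) :=
  Finset.measurable_sum _ fun k _ => hψ.comp (hT.iterate k)

theorem ae_abs_birkhoffSum_le (hT : Measure.QuasiMeasurePreserving T m m) {ψ : X → ℝ} {K : ℝ}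
    (hψ : ∀ᵐ x ∂m, |ψ x| ≤ K) : ∀ᵐ x ∂m, ∀ n : ℕ, |birkhoffSum T ψ n x| ≤ n * K := by
  have horbit : ∀ᵐ x ∂m, ∀ k : ℕ, |ψ (T^[k] x)| ≤ K :=
    ae_all_iff.2 fun k => (hT.iterate k).ae hψ
  filter_upwards [horbit] with x hx n
  calc |birkhoffSum T ψ n x| ≤ ∑ k ∈ Finset.range n, |ψ (T^[k] x)| :=
        Finset.abs_sum_le_sum_abs _ _
    _ ≤ n * K := by simpa using Finset.sum_le_card_nsmul (Finset.range n) _ K fun k _ => hx k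

theorem integral_simpleFunc_mul_eq_of_setIntegral_eq (hT : Measurable T) {u w : X → ℂ}
    (hu : Integrable u m) (hw : Integrable w m)
    (hset : ∀ A, MeasurableSet A → ∫ x in A, w x ∂m = ∫ x in T ⁻¹' A, u x ∂m)
    (s : SimpleFunc X ℂ) : ∫ x, s x * w x ∂m = ∫ x, s (T x) * u x ∂m := by
  have hint : ∀ (t : SimpleFunc X ℂ) {f : X → ℂ}, Integrable f m →
      Integrable (fun x => t x * f x) m := fun t f hf => by
    obtain ⟨C, hC⟩ := t.exists_forall_norm_le
    exact hf.bdd_mul t.aestronglyMeasurable (Eventually.of_forall hC)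
  induction s using SimpleFunc.induction with
  | @const c A hA =>
    simp only [SimpleFunc.coe_piecewise, SimpleFunc.coe_const, SimpleFunc.const_zero,
      SimpleFunc.coe_zero, Set.piecewise_eq_indicator]
    simp_rw [← Set.indicator_comp_right, ← Set.indicator_mul_left]
    rw [integral_indicator hA, integral_indicator (hT hA)]
    simpa [integral_const_mul] using congrArg (c * ·) (hset A hA)
  | @add f g _ ihf ihg =>
    simp only [SimpleFunc.coe_add, Pi.add_apply, add_mul]
    rw [integral_add (hint f hw) (hint g hw), ihf, ihg]
    exact (integral_add (hint (f.comp T hT) hu) (hint (g.comp T hT) hu)).symm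

theorem integral_mul_eq_of_setIntegral_eq (hT : Measure.QuasiMeasurePreserving T m m)
    {u w : X → ℂ} (hu : Integrable u m) (hw : Integrable w m)
    (hset : ∀ A, MeasurableSet A → ∫ x in A, w x ∂m = ∫ x in T ⁻¹' A, u x ∂m)
    {h : X → ℂ} (hh : Measurable h) {M : ℝ} (hM : ∀ᵐ x ∂m, ‖h x‖ ≤ M) :
    ∫ x, h x * w x ∂m = ∫ x, h (T x) * u x ∂m := by
  set s : ℕ → SimpleFunc X ℂ := SimpleFunc.approxOn h hh Set.univ 0 (Set.mem_univ 0)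
  have hlim : ∀ {g : X → X}, Measurable g → ∀ {f : X → ℂ}, Integrable f m →
      (∀ᵐ x ∂m, ‖h (g x)‖ ≤ M) →
      Tendsto (fun n => ∫ x, s n (g x) * f x ∂m) atTop (𝓝 (∫ x, h (g x) * f x ∂m)) := by
    intro g hg f hf hMg
    refine tendsto_integral_of_dominated_convergence (fun x => (M + M) * ‖f x‖)
      (fun n => ((s n).measurable.comp hg).aestronglyMeasurable.mul hf.1)
      (hf.norm.const_mul _) (fun n => ?_) (Eventually.of_forall fun x =>
        (SimpleFunc.tendsto_approxOn hh _ (by simp)).mul tendsto_const_nhds)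
    filter_upwards [hMg] with x hx
    rw [norm_mul]
    gcongr
    exact (SimpleFunc.norm_approxOn_zero_le hh _ (g x) n).trans (by linarith)
  refine tendsto_nhds_unique ?_ (hlim hT.measurable hu (hT.ae hM))
  simpa only [id, integral_simpleFunc_mul_eq_of_setIntegral_eq hT.measurable hu hw hset]
    using hlim measurable_id hw hM

theorem ae_norm_exp_birkhoffSum_le {𝕜 : Type*} [RCLike 𝕜]
    (hT : Measure.QuasiMeasurePreserving T m m) {ψ : X → ℝ} {K : ℝ}
    (hψK : ∀ᵐ x ∂m, |ψ x| ≤ K) (n : ℕ) :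
    ∀ᵐ x ∂m, ‖(Real.exp (birkhoffSum T ψ n x) : 𝕜)‖ ≤ Real.exp (n * K) := by
  filter_upwards [ae_abs_birkhoffSum_le hT hψK] with x hx
  rw [RCLike.norm_ofReal, abs_of_pos (Real.exp_pos _)]
  exact Real.exp_le_exp.2 ((le_abs_self _).trans (hx n))

theorem integrable_exp_birkhoffSum_mul {𝕜 : Type*} [RCLike 𝕜]
    (hT : Measure.QuasiMeasurePreserving T m m) {ψ : X → ℝ} (hψ : Measurable ψ) {K : ℝ}
    (hψK : ∀ᵐ x ∂m, |ψ x| ≤ K) {F : X → 𝕜} (hF : Integrable F m) (n : ℕ) :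
    Integrable (fun x => (Real.exp (birkhoffSum T ψ n x) : 𝕜) * F x) m :=
  hF.bdd_mul (RCLike.measurable_ofReal.comp
      (Real.measurable_exp.comp (measurable_birkhoffSum hT.measurable hψ n))).aestronglyMeasurable
    (ae_norm_exp_birkhoffSum_le hT hψK n)

theorem exp_neg_pow_le_integral_exp_birkhoffSum_mul (hT : Measure.QuasiMeasurePreserving T m m)
    {ψ : X → ℝ} (hψ : Measurable ψ) {K : ℝ} (hψK : ∀ᵐ x ∂m, |ψ x| ≤ K) {F : X → ℝ}
    (hF : Integrable F m) (hF0 : ∀ᵐ x ∂m, 0 ≤ F x) (hF1 : ∫ x, F x ∂m = 1) (n : ℕ) :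
    Real.exp (-K) ^ n ≤ ∫ x, Real.exp (birkhoffSum T ψ n x) * F x ∂m := by
  calc Real.exp (-K) ^ n = ∫ x, Real.exp (n * -K) * F x ∂m := by
        rw [integral_const_mul, hF1, mul_one, Real.exp_nat_mul]
    _ ≤ ∫ x, Real.exp (birkhoffSum T ψ n x) * F x ∂m := by
        refine integral_mono_ae (hF.const_mul _)
          (integrable_exp_birkhoffSum_mul hT hψ hψK hF n) ?_
        filter_upwards [ae_abs_birkhoffSum_le hT hψK, hF0] with x hx hFx
        gcongr
        linarith [neg_abs_le (birkhoffSum T ψ n x), hx n]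

end Nonsingular

section TransferOperator

variable {X B : Type*} [MeasurableSpace X] {m : Measure X} {T : X → X}
  [NormedAddCommGroup B] [NormedSpace ℂ B] {ι : B →L[ℂ] Lp ℂ 1 m} {P : B →L[ℂ] B}
  {mul : B →L[ℂ] B →L[ℂ] B}

theorem integral_exp_birkhoffSum_mul_eq_integral_pow
    (hT : Measure.QuasiMeasurePreserving T m m)
    (hP : ∀ (f : B) (A : Set X), MeasurableSet A →
        ∫ x in A, (ι (P f) : X → ℂ) x ∂m = ∫ x in T ⁻¹' A, (ι f : X → ℂ) x ∂m)
    (hmul : ∀ f g : B, ∀ᵐ x ∂m,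
        (ι (mul f g) : X → ℂ) x = (ι f : X → ℂ) x * (ι g : X → ℂ) x)
    {ψ : X → ℝ} (hψ : Measurable ψ) {K : ℝ} (hψK : ∀ᵐ x ∂m, |ψ x| ≤ K)
    {e : B} (he : ∀ᵐ x ∂m, (ι e : X → ℂ) x = Real.exp (ψ x)) (n : ℕ) (g : B) :
    ∫ x, (Real.exp (birkhoffSum T ψ n x) : ℂ) * (ι g : X → ℂ) x ∂m
      = ∫ x, (ι (((P ∘L mul e) ^ n) g) : X → ℂ) x ∂m := by
  induction n generalizing g with
  | zero => simp
  | succ n ih =>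
    have hshift : ∀ᵐ x ∂m, (Real.exp (birkhoffSum T ψ (n + 1) x) : ℂ) * (ι g : X → ℂ) x
        = (Real.exp (birkhoffSum T ψ n (T x)) : ℂ) * (ι (mul e g) : X → ℂ) x := by
      filter_upwards [hmul e g, he] with x hx hex
      rw [birkhoffSum_succ', hx, hex, Real.exp_add]
      push_cast
      ring
    rw [integral_congr_ae hshift, ← integral_mul_eq_of_setIntegral_eq hT
      (L1.integrable_coeFn _) (L1.integrable_coeFn _) (hP (mul e g))
      (h := fun x => (Real.exp (birkhoffSum T ψ n x) : ℂ))
      (Complex.measurable_ofReal.comp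
        (Real.measurable_exp.comp (measurable_birkhoffSum hT.measurable hψ n)))
      (ae_norm_exp_birkhoffSum_le hT hψK n), ih, pow_succ, mul_apply_eq_comp]
    rfl

theorem tendsto_inv_mul_log_integral_exp_birkhoffSum_mul
    (hT : Measure.QuasiMeasurePreserving T m m)
    (hP : ∀ (f : B) (A : Set X), MeasurableSet A →
        ∫ x in A, (ι (P f) : X → ℂ) x ∂m = ∫ x in T ⁻¹' A, (ι f : X → ℂ) x ∂m)
    (hmul : ∀ f g : B, ∀ᵐ x ∂m,
        (ι (mul f g) : X → ℂ) x = (ι f : X → ℂ) x * (ι g : X → ℂ) x)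
    {ψ : X → ℝ} (hψ : Measurable ψ) {K : ℝ} (hψK : ∀ᵐ x ∂m, |ψ x| ≤ K)
    {e : B} (he : ∀ᵐ x ∂m, (ι e : X → ℂ) x = Real.exp (ψ x))
    {Λ : ℝ} {p : B →L[ℂ] ℂ} {v : B} {Q : B →L[ℂ] B}
    (hL : ∀ g, P (mul e g) = ((Λ : ℂ) * p g) • v + Q g) (hpv : p v = 1) (hQv : Q v = 0)
    (hpQ : p ∘L Q = 0) {C r : ℝ} (hQ : ∀ n : ℕ, ‖Q ^ n‖ ≤ C * r ^ n) (hr : 0 ≤ r)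
    (hrΛ : r < Λ) (hrK : r < Real.exp (-K))
    {f : B} (hf0 : ∀ᵐ x ∂m, 0 ≤ ((ι f : X → ℂ) x).re) (hf1 : ∫ x, (ι f : X → ℂ) x ∂m = 1) :
    Tendsto (fun n : ℕ => (n : ℝ)⁻¹ *
        Real.log (∫ x, Real.exp (birkhoffSum T ψ n x) * ((ι f : X → ℂ) x).re ∂m))
      atTop (𝓝 (Real.log Λ)) := by
  set mass : B →L[ℂ] ℂ := (L1.integralCLM' ℂ).comp ι
  have hmass : ∀ g, mass g = ∫ x, (ι g : X → ℂ) x ∂m := fun g => by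
    simp [mass, ← L1.integral_eq' ℂ, L1.integral_eq_integral]
  have hRe : ∀ n, ∫ x, Real.exp (birkhoffSum T ψ n x) * ((ι f : X → ℂ) x).re ∂m
      = (mass (((P ∘L mul e) ^ n) f)).re := fun n => by
    have hint : Integrable (fun x => (Real.exp (birkhoffSum T ψ n x) : ℂ) * (ι f : X → ℂ) x) m :=
      integrable_exp_birkhoffSum_mul hT hψ hψK (L1.integrable_coeFn _) n
    rw [hmass, ← integral_exp_birkhoffSum_mul_eq_integral_pow hT hP hmul hψ hψK he,
      ← RCLike.re_eq_complex_re, ← integral_re hint]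
    simp only [RCLike.re_to_complex, Complex.re_ofReal_mul]
  refine tendsto_inv_mul_log_of_abs_sub_le (a := (p f * mass v).re) (D := ‖mass‖ * C * ‖f‖)
    hr hrK hrΛ (Eventually.of_forall fun n => ?_) ?_
  · have hF1 : ∫ x, ((ι f : X → ℂ) x).re ∂m = 1 := by
      simpa [hf1] using integral_re (𝕜 := ℂ) (L1.integrable_coeFn (ι f))
    exact exp_neg_pow_le_integral_exp_birkhoffSum_mul hT hψ hψK
      (L1.integrable_coeFn (ι f)).re hf0 hF1 n
  · filter_upwards [eventually_ge_atTop 1] with n hn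
    obtain ⟨k, rfl⟩ := Nat.exists_eq_add_of_le' hn
    rw [hRe]
    calc |(mass (((P ∘L mul e) ^ (k + 1)) f)).re - (p f * mass v).re * Λ ^ (k + 1)|
        = |(mass (((P ∘L mul e) ^ (k + 1)) f) - (Λ : ℂ) ^ (k + 1) * p f * mass v).re| := by
          rw [Complex.sub_re, mul_assoc, ← Complex.ofReal_pow, Complex.re_ofReal_mul, mul_comm]
      _ ≤ ‖mass‖ * ‖Q ^ (k + 1)‖ * ‖f‖ := (Complex.abs_re_le_norm _).trans
          (norm_apply_pow_succ_sub_le (L := P ∘L mul e) hL hpv hQv hpQ mass k f)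
      _ ≤ ‖mass‖ * (C * r ^ (k + 1)) * ‖f‖ := by gcongr; exact hQ (k + 1)
      _ = ‖mass‖ * C * ‖f‖ * r ^ (k + 1) := by ring

end TransferOperator

theorem stmt_9_general
    {X : Type*} [MeasurableSpace X] (m : Measure X)
    (T : X → X) (hT : Measurable T)
    (hns : ∀ A : Set X, MeasurableSet A → m A = 0 → m (T ⁻¹' A) = 0)
    -- B is a complex Banach space continuously embedded in L¹(m)
    {B : Type*} [NormedAddCommGroup B] [NormedSpace ℂ B]
    (ι : B →L[ℂ] Lp ℂ 1 m)
    -- B is a Banach algebra : mulB is the pointwise multiplication, a continuous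
    -- bilinear map (hence ∃ C > 0, ‖f*g‖_B ≤ C ‖f‖_B ‖g‖_B with C = ‖mulB‖)
    (mulB : B →L[ℂ] B →L[ℂ] B)
    (hmulB : ∀ f g : B, ∀ᵐ x ∂m,
        (ι (mulB f g) : X → ℂ) x = (ι f : X → ℂ) x * (ι g : X → ℂ) x)
    -- P(B) ⊂ B and P restricted to B is bounded : PB is the restriction to B of the
    -- Perron-Frobenius operator P f = d m_f / dm, m_f (A) = ∫_{T⁻¹A} f dm
    (PB : B →L[ℂ] B)
    (hPB : ∀ (f : B) (A : Set X), MeasurableSet A →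
        ∫ x in A, (ι (PB f) : X → ℂ) x ∂m = ∫ x in T ⁻¹' A, (ι f : X → ℂ) x ∂m)
    -- φ ∈ B is a bounded real-valued observable with ∫ φ dμ = 0
    (φ : B) (hφreal : ∀ᵐ x ∂m, ((ι φ : X → ℂ) x).im = 0)
    (hφbdd : ∃ K : ℝ, ∀ᵐ x ∂m, ‖(ι φ : X → ℂ) x‖ ≤ K)
    -- S n = Σ_{k<n} φ ∘ T^k are the Birkhoff sums of φ
    (S : ℕ → X → ℝ)
    (hS : ∀ (n : ℕ) (x : X), S n x = ∑ k ∈ Finset.range n, ((ι φ : X → ℂ) (T^[k] x)).re)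
    -- E z is the element of B representing e^{zφ} (cf. Statement 6)
    (E : ℂ → B)
    (hE : ∀ z : ℂ, ∀ᵐ x ∂m, (ι (E z) : X → ℂ) x = Complex.exp (z * (ι φ : X → ℂ) x))
    -- data given by Proposition 1 : perturbed spectral decomposition of P_z f = P(e^{zφ} f)
    (θ₀ : ℝ) (C : ℝ) (hC : 0 < C) (η₁ η₂ : ℝ) (hη₁ : 0 < η₁) (hη₂ : 0 < η₂)
    (lam : ℂ → ℂ) (vf : ℂ → B) (pf : ℂ → (B →L[ℂ] ℂ)) (Qf : ℂ → (B →L[ℂ] B))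
    (hPz : ∀ z ∈ Metric.ball (0 : ℂ) θ₀, ∀ f : B,
        PB (mulB (E z) f) = (lam z * pf z f) • vf z + Qf z f)
    (hnorml : ∀ z ∈ Metric.ball (0 : ℂ) θ₀, pf z (vf z) = 1)
    (hQfv : ∀ z ∈ Metric.ball (0 : ℂ) θ₀, Qf z (vf z) = 0)
    (hpfQf : ∀ z ∈ Metric.ball (0 : ℂ) θ₀, (pf z).comp (Qf z) = 0)
    (hlamlb : ∀ z ∈ Metric.ball (0 : ℂ) θ₀, 1 - η₁ < ‖lam z‖)
    (hQfn : ∀ z ∈ Metric.ball (0 : ℂ) θ₀, ∀ n : ℕ, ‖(Qf z) ^ n‖ ≤ C * (1 - η₁ - η₂) ^ n)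
    -- data given by Proposition 2 : θ₁ and positivity of the eigenvalue, eigenfunction
    -- and eigenform for real θ, |θ| < θ₁
    (θ₁ : ℝ) (hθ₁pos : 0 < θ₁) (hθ₁lt : θ₁ < θ₀)
    (hlampos : ∀ θ : ℝ, |θ| < θ₁ → 0 < (lam (θ : ℂ)).re ∧ (lam (θ : ℂ)).im = 0)
    :
    ∃ θ₂ : ℝ, 0 < θ₂ ∧ θ₂ < θ₁ ∧
      ∀ θ : ℝ, |θ| < θ₂ →
        ∀ f : B, (∀ᵐ x ∂m, 0 ≤ ((ι f : X → ℂ) x).re ∧ ((ι f : X → ℂ) x).im = 0) →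
          (∫ x, (ι f : X → ℂ) x ∂m = 1) →
          Tendsto (fun n : ℕ => (n : ℝ)⁻¹ *
              Real.log (∫ x, Real.exp (θ * S n x) * ((ι f : X → ℂ) x).re ∂m))
            atTop (𝓝 (Real.log (lam (θ : ℂ)).re)) := by
  have hTq := quasiMeasurePreserving_of_preimage_null hT hns
  obtain ⟨K, hK⟩ := hφbdd
  refine ⟨min (θ₁ / 2) ((η₁ + η₂) / (|K| + 1)), lt_min (by linarith) (by positivity),
    (min_le_left _ _).trans_lt (by linarith), fun θ hθ f hf0 hf1 => ?_⟩
  have hθ₁' : |θ| < θ₁ := hθ.trans_le ((min_le_left _ _).trans (by linarith))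
  have hz : (θ : ℂ) ∈ Metric.ball (0 : ℂ) θ₀ := by simpa using hθ₁'.trans hθ₁lt
  obtain ⟨hΛ, hlam_im⟩ := hlampos θ hθ₁'
  have hlam : lam θ = (lam θ).re := Complex.ext rfl (by simpa using hlam_im)
  have hΛlb := hlamlb θ hz
  rw [hlam, Complex.norm_real, Real.norm_of_nonneg hΛ.le] at hΛlb
  have hr : 0 ≤ 1 - η₁ - η₂ :=
    nonneg_of_mul_nonneg_right ((norm_nonneg _).trans (by simpa using hQfn θ hz 1)) hC
  set ψ : X → ℝ := fun x => θ * ((ι φ : X → ℂ) x).re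
  have hψK : ∀ᵐ x ∂m, |ψ x| ≤ |θ| * K := by
    filter_upwards [hK] with x hx
    rw [abs_mul]
    exact mul_le_mul_of_nonneg_left ((Complex.abs_re_le_norm _).trans hx) (abs_nonneg θ)
  have he : ∀ᵐ x ∂m, (ι (E θ) : X → ℂ) x = Real.exp (ψ x) := by
    filter_upwards [hE θ, hφreal] with x hx hreal
    rw [hx, Complex.ofReal_exp]
    congr 1
    apply Complex.ext <;> simp [ψ, hreal]
  have hSψ : ∀ n x, θ * S n x = birkhoffSum T ψ n x := by
    simp [hS, birkhoffSum, Finset.mul_sum, ψ]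
  have hθK : |θ| * K < η₁ + η₂ := by
    have := (lt_div_iff₀ (by positivity)).1 (hθ.trans_le (min_le_right _ _))
    nlinarith [le_abs_self K, abs_nonneg θ]
  simp_rw [hSψ]
  refine tendsto_inv_mul_log_integral_exp_birkhoffSum_mul hTq hPB hmulB
    ((Complex.measurable_re.comp (Lp.stronglyMeasurable _).measurable).const_mul θ) hψK he
    (fun g => by rw [hPz θ hz g, ← hlam]) (hnorml θ hz) (hQfv θ hz) (hpfQf θ hz) (hQfn θ hz)
    hr (by linarith) (by linarith [Real.add_one_le_exp (-(|θ| * K))])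
    (hf0.mono fun x hx => hx.1) hf1

/-- **Proposition 3.** For `Λ(θ) = log λ(θ)` : there is `0 < θ₂ < θ₁` such
that for real `|θ| < θ₂` and every density `f ∈ B` (`f ≥ 0`, `∫ f dm = 1`),
`(1/n) log ∫ e^{θ S_n} f dm → Λ(θ)`. -/
theorem stmt_9
    {X : Type*} [MeasurableSpace X] (m : Measure X) [IsProbabilityMeasure m]
    (T : X → X) (hT : Measurable T)
    (hns : ∀ A : Set X, MeasurableSet A → m A = 0 → m (T ⁻¹' A) = 0)
    -- B is a complex Banach space continuously embedded in L¹(m)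
    {B : Type*} [NormedAddCommGroup B] [NormedSpace ℂ B] [CompleteSpace B]
    (ι : B →L[ℂ] Lp ℂ 1 m) (hι : Function.Injective ι)
    -- constant functions lie in B
    (oneB : B) (honeB : ∀ᵐ x ∂m, (ι oneB : X → ℂ) x = 1)
    -- B is a Banach algebra : mulB is the pointwise multiplication, a continuous
    -- bilinear map (hence ∃ C > 0, ‖f*g‖_B ≤ C ‖f‖_B ‖g‖_B with C = ‖mulB‖)
    (mulB : B →L[ℂ] B →L[ℂ] B)
    (hmulB : ∀ f g : B, ∀ᵐ x ∂m,
        (ι (mulB f g) : X → ℂ) x = (ι f : X → ℂ) x * (ι g : X → ℂ) x)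
    -- B is a complex Banach lattice : stable under conjugation and modulus
    (conjB : B → B)
    (hconjB : ∀ f : B, ∀ᵐ x ∂m, (ι (conjB f) : X → ℂ) x = starRingEnd ℂ ((ι f : X → ℂ) x))
    (absB : B → B)
    (habsB : ∀ f : B, ∀ᵐ x ∂m,
        (ι (absB f) : X → ℂ) x = ((‖(ι f : X → ℂ) x‖ : ℝ) : ℂ))
    -- P(B) ⊂ B and P restricted to B is bounded : PB is the restriction to B of the
    -- Perron-Frobenius operator P f = d m_f / dm, m_f (A) = ∫_{T⁻¹A} f dm
    (PB : B →L[ℂ] B)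
    (hPB : ∀ (f : B) (A : Set X), MeasurableSet A →
        ∫ x in A, (ι (PB f) : X → ℂ) x ∂m = ∫ x in T ⁻¹' A, (ι f : X → ℂ) x ∂m)
    -- the spectral radius of P on B is 1
    (hrad : spectralRadius ℂ (PB : B →L[ℂ] B) = 1)
    -- spectral gap : 1 is a simple eigenvalue of P on B and the only eigenvalue of
    -- modulus 1, so P f = ⟨m,f⟩ v + Q f with v the invariant density and Q of
    -- spectral radius < 1, Q v = 0, ⟨m, Q f⟩ = 0
    (v : B) (hv0 : ∀ᵐ x ∂m, 0 ≤ ((ι v : X → ℂ) x).re ∧ ((ι v : X → ℂ) x).im = 0)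
    (hv1 : ∫ x, (ι v : X → ℂ) x ∂m = 1) (hvfix : PB v = v)
    (Q : B →L[ℂ] B) (hQrad : spectralRadius ℂ (Q : B →L[ℂ] B) < 1)
    (hQv : Q v = 0) (hQm : ∀ f : B, ∫ x, (ι (Q f) : X → ℂ) x ∂m = 0)
    (hdecomp : ∀ f : B, PB f = (∫ x, (ι f : X → ℂ) x ∂m) • v + Q f)
    -- μ = v · m is the unique T-invariant a.c.i.p. with density in B
    (μ : Measure X)
    (hμ : μ = m.withDensity fun x => ENNReal.ofReal ((ι v : X → ℂ) x).re)
    -- φ ∈ B is a bounded real-valued observable with ∫ φ dμ = 0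
    (φ : B) (hφreal : ∀ᵐ x ∂m, ((ι φ : X → ℂ) x).im = 0)
    (hφbdd : ∃ K : ℝ, ∀ᵐ x ∂m, ‖(ι φ : X → ℂ) x‖ ≤ K)
    (hφmean : ∫ x, ((ι φ : X → ℂ) x).re ∂μ = 0)
    -- S n = Σ_{k<n} φ ∘ T^k are the Birkhoff sums of φ
    (S : ℕ → X → ℝ)
    (hS : ∀ (n : ℕ) (x : X), S n x = ∑ k ∈ Finset.range n, ((ι φ : X → ℂ) (T^[k] x)).re)
    -- E z is the element of B representing e^{zφ} (cf. Statement 6)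
    (E : ℂ → B)
    (hE : ∀ z : ℂ, ∀ᵐ x ∂m, (ι (E z) : X → ℂ) x = Complex.exp (z * (ι φ : X → ℂ) x))
    -- data given by Proposition 1 : perturbed spectral decomposition of P_z f = P(e^{zφ} f)
    (θ₀ : ℝ) (hθ₀ : 0 < θ₀) (C : ℝ) (hC : 0 < C) (η₁ η₂ : ℝ) (hη₁ : 0 < η₁) (hη₂ : 0 < η₂)
    (lam : ℂ → ℂ) (vf : ℂ → B) (pf : ℂ → (B →L[ℂ] ℂ)) (Qf : ℂ → (B →L[ℂ] B))
    (hlamhol : DifferentiableOn ℂ lam (Metric.ball 0 θ₀))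
    (hvfhol : DifferentiableOn ℂ vf (Metric.ball 0 θ₀))
    (hpfhol : DifferentiableOn ℂ pf (Metric.ball 0 θ₀))
    (hQfhol : DifferentiableOn ℂ Qf (Metric.ball 0 θ₀))
    (hlam0 : lam 0 = 1) (hvf0 : vf 0 = v)
    (hpf0 : ∀ f : B, pf 0 f = ∫ x, (ι f : X → ℂ) x ∂m) (hQf0 : Qf 0 = Q)
    (hPz : ∀ z ∈ Metric.ball (0 : ℂ) θ₀, ∀ f : B,
        PB (mulB (E z) f) = (lam z * pf z f) • vf z + Qf z f)
    (hnorml : ∀ z ∈ Metric.ball (0 : ℂ) θ₀, pf z (vf z) = 1)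
    (hQfv : ∀ z ∈ Metric.ball (0 : ℂ) θ₀, Qf z (vf z) = 0)
    (hpfQf : ∀ z ∈ Metric.ball (0 : ℂ) θ₀, (pf z).comp (Qf z) = 0)
    (hlamlb : ∀ z ∈ Metric.ball (0 : ℂ) θ₀, 1 - η₁ < ‖lam z‖)
    (hQfn : ∀ z ∈ Metric.ball (0 : ℂ) θ₀, ∀ n : ℕ, ‖(Qf z) ^ n‖ ≤ C * (1 - η₁ - η₂) ^ n)
    -- data given by Proposition 2 : θ₁ and positivity of the eigenvalue, eigenfunction
    -- and eigenform for real θ, |θ| < θ₁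
    (θ₁ : ℝ) (hθ₁pos : 0 < θ₁) (hθ₁lt : θ₁ < θ₀)
    (hlampos : ∀ θ : ℝ, |θ| < θ₁ → 0 < (lam (θ : ℂ)).re ∧ (lam (θ : ℂ)).im = 0)
    (hone : ∀ z ∈ Metric.ball (0 : ℂ) θ₁, pf z oneB ≠ 0)
    (hvpos : ∀ θ : ℝ, |θ| < θ₁ →
        ∀ᵐ x ∂m, 0 ≤ ((ι (pf (θ : ℂ) oneB • vf (θ : ℂ)) : X → ℂ) x).re ∧
          ((ι (pf (θ : ℂ) oneB • vf (θ : ℂ)) : X → ℂ) x).im = 0)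
    (hppos : ∀ θ : ℝ, |θ| < θ₁ → ∀ f : B,
        (∀ᵐ x ∂m, 0 ≤ ((ι f : X → ℂ) x).re ∧ ((ι f : X → ℂ) x).im = 0) →
        0 ≤ (((pf (θ : ℂ) oneB)⁻¹ • pf (θ : ℂ)) f).re ∧
          (((pf (θ : ℂ) oneB)⁻¹ • pf (θ : ℂ)) f).im = 0)
    -- the spectral radius of Q(θ) is strictly smaller than λ(θ)
    (hQlam : ∀ θ : ℝ, |θ| < θ₁ →
        spectralRadius ℂ (Qf (θ : ℂ) : B →L[ℂ] B) < ENNReal.ofReal (lam (θ : ℂ)).re)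
    :
    ∃ θ₂ : ℝ, 0 < θ₂ ∧ θ₂ < θ₁ ∧
      ∀ θ : ℝ, |θ| < θ₂ →
        ∀ f : B, (∀ᵐ x ∂m, 0 ≤ ((ι f : X → ℂ) x).re ∧ ((ι f : X → ℂ) x).im = 0) →
          (∫ x, (ι f : X → ℂ) x ∂m = 1) →
          Tendsto (fun n : ℕ => (n : ℝ)⁻¹ *
              Real.log (∫ x, Real.exp (θ * S n x) * ((ι f : X → ℂ) x).re ∂m))
            atTop (𝓝 (Real.log (lam (θ : ℂ)).re)) :=
  stmt_9_general m T hT hns ι mulB hmulB PB hPB φ hφreal hφbdd S hS E hE θ₀ C hC η₁ η₂ hη₁ hη₂ lam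
    vf pf Qf hPz hnorml hQfv hpfQf hlamlb hQfn θ₁ hθ₁pos hθ₁lt hlampos
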